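/- arXiv:1507.00528 — 4 statements merged into one kernel-verified Lean document; each statement's English description precedes it below -/
import Mathlib

section
/- Let R be a symmetric positive definite n×n matrix partitioned into blocks R₁₁, R₁₂, R₂₁ = R₁₂ᵗ, R₂₂, and let R_τ have diagonal blocks R₁₁, R₂₂ and off-diagonal blocks τR₁₂, τR₂₁. Then det(R_τ) = det(R₁₁)·det(R₂₂)·∏ᵢ(1 − τ²λᵢ), where λᵢ are the eigenvalues of R₁₁^{−1/2} R₁₂ R₂₂^{−1} R₂₁ R₁₁^{−1/2}. -/
/-!
By the Schur complement with respect to `R₂₂`, `det R_τ = det R₂₂ · det (R₁₁ - τ² R₁₂ R₂₂⁻¹ R₂₁)`.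
Writing `R₁₁ = S S` with `S = R₁₁^{1/2}`, the complement factors as `S (1 - τ² M) S`, and
`det (1 - τ² M) = ∏ᵢ (1 - τ² λᵢ)` because `1 - τ² M` is `x ↦ 1 - τ² x` applied to `M` by the
continuous functional calculus.
-/

open Matrix

open scoped ComplexOrder in
/-- The positive semidefinite square root, as `Matrix.PosSemidef.sqrt` was defined in Mathlib
(December 2024); the name has since been removed from Mathlib. -/
noncomputable def Matrix.PosSemidef.sqrt {n 𝕜 : Type*} [Fintype n] [DecidableEq n] [RCLike 𝕜]
    {A : Matrix n n 𝕜} (hA : A.PosSemidef) : Matrix n n 𝕜 :=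
  hA.1.eigenvectorUnitary.1 * diagonal ((↑) ∘ (√·) ∘ hA.1.eigenvalues) *
    (star hA.1.eigenvectorUnitary : Matrix n n 𝕜)

namespace Matrix

section RCLike

open scoped ComplexOrder

variable {n 𝕜 : Type*} [Fintype n] [DecidableEq n] [RCLike 𝕜]

lemma PosSemidef.sqrt_eq_cfc {A : Matrix n n 𝕜} (hA : A.PosSemidef) :
    hA.sqrt = cfc Real.sqrt A := by
  rw [hA.1.cfc_eq]
  rfl

lemma PosSemidef.sqrt_mul_sqrt {A : Matrix n n 𝕜} (hA : A.PosSemidef) :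
    hA.sqrt * hA.sqrt = A := by
  rw [hA.sqrt_eq_cfc, ← cfc_mul Real.sqrt Real.sqrt A]
  conv_rhs => rw [← cfc_id' ℝ A hA.1.isSelfAdjoint]
  refine cfc_congr fun x hx => Real.mul_self_sqrt ?_
  rw [hA.1.spectrum_real_eq_range_eigenvalues] at hx
  obtain ⟨i, rfl⟩ := hx
  exact hA.eigenvalues_nonneg i

lemma IsHermitian.det_cfc {A : Matrix n n 𝕜} (hA : A.IsHermitian) (f : ℝ → ℝ) :
    (cfc f A).det = ∏ i, (f (hA.eigenvalues i) : 𝕜) := by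
  simp [hA.cfc_eq, IsHermitian.cfc, -Unitary.conjStarAlgAut_apply, det_diagonal]

lemma IsHermitian.det_one_sub_smul {A : Matrix n n 𝕜} (hA : A.IsHermitian) (c : ℝ) :
    (1 - c • A).det = ∏ i, ((1 - c * hA.eigenvalues i : ℝ) : 𝕜) := by
  rw [← hA.det_cfc (fun x => 1 - c * x), cfc_sub (fun _ => 1) (c * ·), cfc_const_one ℝ A,
    cfc_const_mul_id c A]

end RCLike

section CommRing

variable {m n R : Type*} [Fintype m] [Fintype n] [DecidableEq m] [DecidableEq n] [CommRing R]

lemma det_fromBlocks_smul_smul (A : Matrix m m R) (B : Matrix m n R) (C : Matrix n m R)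
    (D : Matrix n n R) [Invertible D] (c : R) :
    (fromBlocks A (c • B) (c • C) D).det = D.det * (A - c ^ 2 • (B * D⁻¹ * C)).det := by
  rw [det_fromBlocks₂₂, invOf_eq_nonsing_inv, Matrix.smul_mul, Matrix.smul_mul, Matrix.mul_smul,
    smul_smul, ← sq]

lemma mul_self_sub_smul_eq_mul_one_sub_smul_mul {S : Matrix n n R} (hS : IsUnit S.det)
    (B : Matrix n n R) (c : R) :
    S * S - c • B = S * (1 - c • (S⁻¹ * B * S⁻¹)) * S := by
  simp only [Matrix.mul_sub, Matrix.sub_mul, Matrix.mul_one, Matrix.mul_smul, Matrix.smul_mul,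
    ← Matrix.mul_assoc, mul_nonsing_inv S hS, Matrix.one_mul]
  rw [Matrix.mul_assoc, nonsing_inv_mul S hS, Matrix.mul_one]

end CommRing

end Matrix

theorem stmt1_general {n₁ n₂ : ℕ}
    (R11 : Matrix (Fin n₁) (Fin n₁) ℝ) (R12 : Matrix (Fin n₁) (Fin n₂) ℝ)
    (R22 : Matrix (Fin n₂) (Fin n₂) ℝ)
    (hR11 : R11.PosDef) (hR22 : R22.PosDef)
    (M : Matrix (Fin n₁) (Fin n₁) ℝ)
    (hMdef : M = hR11.posSemidef.sqrt⁻¹ * R12 * R22⁻¹ * R12ᵀ * hR11.posSemidef.sqrt⁻¹)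
    (hM : M.IsHermitian)
    (τ : ℝ) :
    (Matrix.fromBlocks R11 (τ • R12) (τ • R12ᵀ) R22).det
      = R11.det * R22.det * ∏ i, (1 - τ ^ 2 * hM.eigenvalues i) := by
  have : Invertible R22 := hR22.isUnit.invertible
  set S := hR11.posSemidef.sqrt
  have hSS : S * S = R11 := hR11.posSemidef.sqrt_mul_sqrt
  have hS : IsUnit S.det :=
    (isUnit_iff_isUnit_det S).mp (isUnit_of_mul_isUnit_left (hSS ▸ hR11.isUnit))
  have hschur : R11 - τ ^ 2 • (R12 * R22⁻¹ * R12ᵀ) = S * (1 - τ ^ 2 • M) * S := by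
    simpa only [hSS, hMdef, Matrix.mul_assoc] using
      mul_self_sub_smul_eq_mul_one_sub_smul_mul hS (R12 * R22⁻¹ * R12ᵀ) (τ ^ 2)
  rw [det_fromBlocks_smul_smul, hschur, det_mul, det_mul, hM.det_one_sub_smul, ← hSS, det_mul]
  simp only [RCLike.ofReal_real_eq_id, id]
  ring

/-- `det R_τ = det R₁₁ · det R₂₂ · ∏ᵢ (1 − τ²λᵢ)`, where the `λᵢ` are the eigenvalues of
`R₁₁^{-1/2} R₁₂ R₂₂⁻¹ R₂₁ R₁₁^{-1/2}`. -/
theorem stmt1 {n₁ n₂ : ℕ}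
    (R11 : Matrix (Fin n₁) (Fin n₁) ℝ) (R12 : Matrix (Fin n₁) (Fin n₂) ℝ)
    (R22 : Matrix (Fin n₂) (Fin n₂) ℝ)
    (hR : (Matrix.fromBlocks R11 R12 R12ᵀ R22).PosDef)
    (hR11 : R11.PosDef) (hR22 : R22.PosDef)
    (M : Matrix (Fin n₁) (Fin n₁) ℝ)
    (hMdef : M = hR11.posSemidef.sqrt⁻¹ * R12 * R22⁻¹ * R12ᵀ * hR11.posSemidef.sqrt⁻¹)
    (hM : M.IsHermitian)
    (τ : ℝ) (hτ : τ ∈ Set.Icc (0:ℝ) 1) :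
    (Matrix.fromBlocks R11 (τ • R12) (τ • R12ᵀ) R22).det
      = R11.det * R22.det * ∏ i, (1 - τ ^ 2 * hM.eigenvalues i) :=
  stmt1_general R11 R12 R22 hR11 hR22 M hMdef hM τ
end

section
/- Let Q be a symmetric positive definite n×n matrix, partitioned as Q₁₁ (an (n−1)×(n−1) block), a column vector q, its transpose qᵗ, and scalar 1 in the bottom-right corner. Suppose Q has only non-negative entries and Q^{−1} has only non-positive off-diagonal entries. For τ ∈ [0,1] let Q_τ be the matrix with the same Q₁₁ and bottom-right entry 1 but off-diagonal blocks τq and τqᵗ. Then Q_τ is positive definite and Q_τ^{−1} has only non-positive off-diagonal entries. -/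
/-!
Write `Q_τ = [[A, τq], [τqᵀ, 1]]`. It is positive definite as the convex combination
`τ Q + (1 - τ) diag(A, 1)`. The Schur complement of `A` in `Q_τ` is the scalar
`s_τ = 1 - τ² α` with `α = qᵀA⁻¹q ∈ [0, 1)`, and with `u = A⁻¹q`
`Q_τ⁻¹ = [[A⁻¹ + (τ²/s_τ) uuᵀ, -(τ/s_τ) u], [-(τ/s_τ) uᵀ, 1/s_τ]]`.
At `τ = 1` the sign of the off-diagonal column gives `u ≥ 0`, so `uuᵀ ≥ 0` entrywise; since
`τ²/s_τ ≤ 1/s_1`, the off-diagonal entries of the upper-left block can only decrease from their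
(non-positive) values at `τ = 1`.
-/

open Matrix

namespace Matrix

variable {ι m n : Type*}

def IsZMatrix {R : Type*} [Zero R] [LE R] (M : Matrix ι ι R) : Prop :=
  ∀ i j, i ≠ j → M i j ≤ 0

theorem IsZMatrix.of_subsingleton {R : Type*} [Zero R] [LE R] [Subsingleton ι]
    (M : Matrix ι ι R) : M.IsZMatrix :=
  fun i j hij => absurd (Subsingleton.elim i j) hij

theorem isZMatrix_fromBlocks_iff {R : Type*} [Zero R] [LE R] {A : Matrix m m R}
    {B : Matrix m n R} {C : Matrix n m R} {D : Matrix n n R} :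
    (fromBlocks A B C D).IsZMatrix ↔
      A.IsZMatrix ∧ (∀ i j, B i j ≤ 0) ∧ (∀ i j, C i j ≤ 0) ∧ D.IsZMatrix := by
  constructor
  · intro h
    exact ⟨fun i j hij => h (.inl i) (.inl j) (by simpa using hij),
      fun i j => h (.inl i) (.inr j) (by simp), fun i j => h (.inr i) (.inl j) (by simp),
      fun i j hij => h (.inr i) (.inr j) (by simpa using hij)⟩
  · rintro ⟨hA, hB, hC, hD⟩ (i | i) (j | j) hij
    · exact hA i j (by simpa using hij)
    · exact hB i j
    · exact hC i j
    · exact hD i j (by simpa using hij)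

theorem IsZMatrix.add_smul_of_le {B N : Matrix ι ι ℝ} (hN : ∀ i j, 0 ≤ N i j) {c c' : ℝ}
    (h : (B + c • N).IsZMatrix) (hc : c' ≤ c) : (B + c' • N).IsZMatrix := by
  intro i j hij
  have := h i j hij
  simp only [add_apply, smul_apply, smul_eq_mul] at this ⊢
  nlinarith [hN i j]

theorem fromBlocks_smul_offDiag (A : Matrix m m ℝ) (B : Matrix m n ℝ) (C : Matrix n m ℝ)
    (D : Matrix n n ℝ) (t : ℝ) :
    fromBlocks A (t • B) (t • C) D = t • fromBlocks A B C D + (1 - t) • fromBlocks A 0 0 D := by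
  simp only [fromBlocks_smul, fromBlocks_add, smul_zero, add_zero]
  congr 1 <;> module

theorem mul_apply_nonneg {o : Type*} [Fintype o] {M : Matrix m o ℝ} {N : Matrix o n ℝ}
    (hM : ∀ i j, 0 ≤ M i j) (hN : ∀ i j, 0 ≤ N i j) (i : m) (j : n) : 0 ≤ (M * N) i j :=
  Finset.sum_nonneg fun k _ => mul_nonneg (hM i k) (hN k j)

variable [Fintype m] [Fintype n]

theorem PosDef.fromBlocks_zero {A : Matrix m m ℝ} {D : Matrix n n ℝ} (hA : A.PosDef)
    (hD : D.PosDef) : (fromBlocks A 0 0 D).PosDef := by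
  refine posDef_iff_dotProduct_mulVec.mpr
    ⟨isHermitian_fromBlocks_iff.mpr ⟨hA.1, by simp, by simp, hD.1⟩, fun x hx => ?_⟩
  rw [← Sum.elim_comp_inl_inr x] at hx ⊢
  rw [fromBlocks_mulVec]
  simp only [zero_mulVec, add_zero, zero_add, star_trivial, sumElim_dotProduct_sumElim]
  obtain hy | hz : x ∘ Sum.inl ≠ 0 ∨ x ∘ Sum.inr ≠ 0 := by
    by_contra! h
    simp [h] at hx
  · exact add_pos_of_pos_of_nonneg (hA.dotProduct_mulVec_pos hy)
      (hD.posSemidef.dotProduct_mulVec_nonneg _)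
  · exact add_pos_of_nonneg_of_pos (hA.posSemidef.dotProduct_mulVec_nonneg _)
      (hD.dotProduct_mulVec_pos hz)

theorem PosDef.fromBlocks_smul_offDiag {A : Matrix m m ℝ} {B : Matrix m n ℝ}
    {C : Matrix n m ℝ} {D : Matrix n n ℝ} (h : (fromBlocks A B C D).PosDef) {t : ℝ}
    (ht₀ : 0 ≤ t) (ht₁ : t ≤ 1) : (fromBlocks A (t • B) (t • C) D).PosDef := by
  obtain rfl | ht₁ := ht₁.eq_or_lt
  · simpa using h
  have hdiag : (fromBlocks A 0 0 D).PosDef :=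
    .fromBlocks_zero (h.submatrix Sum.inl_injective) (h.submatrix Sum.inr_injective)
  rw [Matrix.fromBlocks_smul_offDiag]
  exact PosDef.posSemidef_add (h.posSemidef.smul ht₀) (hdiag.smul (sub_pos.mpr ht₁))

theorem eq_smul_one_of_fin_one (M : Matrix (Fin 1) (Fin 1) ℝ) : M = M 0 0 • 1 := by
  ext i j
  fin_cases i; fin_cases j
  simp

variable [DecidableEq m]

theorem PosDef.one_sub_schur_pos {A : Matrix m m ℝ} {q : Matrix m (Fin 1) ℝ}
    (h : (fromBlocks A q qᵀ 1).PosDef) : 0 < 1 - (qᵀ * A⁻¹ * q) 0 0 := by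
  have hA : A.PosDef := h.submatrix Sum.inl_injective
  let := hA.isUnit.invertible
  have hdet := h.det_pos
  rw [det_fromBlocks₁₁, invOf_eq_nonsing_inv, det_fin_one] at hdet
  exact pos_of_mul_pos_right hdet hA.det_pos.le

theorem inv_fromBlocks_smul_col {A : Matrix m m ℝ} (hA : A.IsSymm) (hdet : IsUnit A.det)
    (q : Matrix m (Fin 1) ℝ) {t s : ℝ} (hs : 1 - t ^ 2 * (qᵀ * A⁻¹ * q) 0 0 = s) (hs₀ : s ≠ 0) :
    (fromBlocks A (t • q) (t • qᵀ) 1)⁻¹ =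
      fromBlocks (A⁻¹ + (t ^ 2 / s) • (A⁻¹ * q * (A⁻¹ * q)ᵀ)) (-(t / s) • (A⁻¹ * q))
        (-(t / s) • (A⁻¹ * q)ᵀ) (s⁻¹ • 1) := by
  have hAA : A * A⁻¹ = 1 := mul_nonsing_inv A hdet
  have hqA : (A⁻¹ * q)ᵀ = qᵀ * A⁻¹ := by rw [transpose_mul, hA.inv.eq]
  have hqAq := eq_smul_one_of_fin_one (qᵀ * A⁻¹ * q)
  set α := (qᵀ * A⁻¹ * q) 0 0
  subst hs
  apply inv_eq_right_inv
  rw [fromBlocks_multiply, ← fromBlocks_one]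
  congr 1 <;>
    simp only [hqA, Matrix.mul_add, Matrix.mul_smul, Matrix.smul_mul, smul_smul,
      Matrix.one_mul, Matrix.mul_one, ← Matrix.mul_assoc, hAA, hqAq] <;>
    match_scalars <;> field_simp <;> ring

section SchurInverse

variable {A : Matrix m m ℝ} (hA : A.IsSymm) (hdet : IsUnit A.det) {q : Matrix m (Fin 1) ℝ}
include hA hdet

theorem inv_mul_nonneg_and_isZMatrix_of_isZMatrix_inv (hs : 0 < 1 - (qᵀ * A⁻¹ * q) 0 0)
    (hZ : (fromBlocks A q qᵀ 1)⁻¹.IsZMatrix) :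
    (∀ i j, 0 ≤ (A⁻¹ * q) i j) ∧
      (A⁻¹ + (1 / (1 - (qᵀ * A⁻¹ * q) 0 0)) • (A⁻¹ * q * (A⁻¹ * q)ᵀ)).IsZMatrix := by
  have hinv := inv_fromBlocks_smul_col hA hdet q (t := 1) (by rw [one_pow, one_mul]) hs.ne'
  simp only [one_smul, one_pow] at hinv
  obtain ⟨hZA, hu, -⟩ := isZMatrix_fromBlocks_iff.mp (hinv ▸ hZ)
  refine ⟨fun i j => ?_, hZA⟩
  have := hu i j
  simp only [Matrix.smul_apply, smul_eq_mul, neg_mul, neg_nonpos] at this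
  exact (mul_nonneg_iff_of_pos_left (by positivity)).mp this

theorem isZMatrix_inv_fromBlocks_smul_col {t : ℝ} (ht : 0 ≤ t)
    (hs : 0 < 1 - t ^ 2 * (qᵀ * A⁻¹ * q) 0 0) (hu : ∀ i j, 0 ≤ (A⁻¹ * q) i j)
    (hZ : (A⁻¹ + (t ^ 2 / (1 - t ^ 2 * (qᵀ * A⁻¹ * q) 0 0)) •
      (A⁻¹ * q * (A⁻¹ * q)ᵀ)).IsZMatrix) :
    (fromBlocks A (t • q) (t • qᵀ) 1)⁻¹.IsZMatrix := by
  have hcoef : 0 ≤ t / (1 - t ^ 2 * (qᵀ * A⁻¹ * q) 0 0) := div_nonneg ht hs.le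
  rw [inv_fromBlocks_smul_col hA hdet q rfl hs.ne']
  refine isZMatrix_fromBlocks_iff.mpr ⟨hZ, fun i j => ?_, fun i j => ?_,
    IsZMatrix.of_subsingleton _⟩
  all_goals
    simp only [Matrix.smul_apply, transpose_apply, smul_eq_mul, neg_mul, neg_nonpos]
    exact mul_nonneg hcoef (hu _ _)

end SchurInverse

end Matrix

theorem sq_div_one_sub_mul_le {α t : ℝ} (hα₀ : 0 ≤ α) (hα₁ : α < 1) (ht : t ^ 2 ≤ 1) :
    t ^ 2 / (1 - t ^ 2 * α) ≤ 1 / (1 - α) := by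
  have : 0 < 1 - t ^ 2 * α := by nlinarith
  rw [div_le_div_iff₀ this (by linarith)]
  nlinarith

theorem stmt4_general {m : ℕ}
    (Q11 : Matrix (Fin m) (Fin m) ℝ) (q : Matrix (Fin m) (Fin 1) ℝ)
    (hQ : (Matrix.fromBlocks Q11 q qᵀ (1 : Matrix (Fin 1) (Fin 1) ℝ)).PosDef)
    (hQinv : ∀ i j, i ≠ j →
      (Matrix.fromBlocks Q11 q qᵀ (1 : Matrix (Fin 1) (Fin 1) ℝ))⁻¹ i j ≤ 0)
    (τ : ℝ) (hτ : τ ∈ Set.Icc (0:ℝ) 1) :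
    (Matrix.fromBlocks Q11 (τ • q) (τ • qᵀ) (1 : Matrix (Fin 1) (Fin 1) ℝ)).PosDef ∧
    ∀ i j, i ≠ j →
      (Matrix.fromBlocks Q11 (τ • q) (τ • qᵀ) (1 : Matrix (Fin 1) (Fin 1) ℝ))⁻¹ i j ≤ 0 := by
  obtain ⟨hτ₀, hτ₁⟩ := hτ
  refine ⟨hQ.fromBlocks_smul_offDiag hτ₀ hτ₁, ?_⟩
  have hA : Q11.PosDef := hQ.submatrix Sum.inl_injective
  have hAsymm : Q11.IsSymm := isHermitian_iff_isSymm.mp hA.1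
  have hdet : IsUnit Q11.det := (isUnit_iff_isUnit_det _).mp hA.isUnit
  have hα₀ : 0 ≤ (qᵀ * Q11⁻¹ * q) 0 0 := by
    simpa using (hA.inv.posSemidef.conjTranspose_mul_mul_same q).diag_nonneg
  have hs₁ := hQ.one_sub_schur_pos
  have hτsq : τ ^ 2 ≤ 1 := by nlinarith
  have hsτ : 0 < 1 - τ ^ 2 * (qᵀ * Q11⁻¹ * q) 0 0 := by nlinarith
  obtain ⟨hu, hZ₁⟩ := inv_mul_nonneg_and_isZMatrix_of_isZMatrix_inv hAsymm hdet hs₁ hQinv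
  exact isZMatrix_inv_fromBlocks_smul_col hAsymm hdet hτ₀ hsτ hu
    (hZ₁.add_smul_of_le (mul_apply_nonneg hu fun i j => hu j i)
      (sq_div_one_sub_mul_le hα₀ (by linarith) hτsq))

/-- If `Q = [[Q₁₁, q],[qᵗ, 1]]` is symmetric positive definite with non-negative entries and
`Q⁻¹` has non-positive off-diagonal entries, then for every `τ ∈ [0,1]` the matrix
`Q_τ = [[Q₁₁, τq],[τqᵗ, 1]]` is positive definite and `Q_τ⁻¹` has non-positive
off-diagonal entries. -/
theorem stmt4 {m : ℕ}
    (Q11 : Matrix (Fin m) (Fin m) ℝ) (q : Matrix (Fin m) (Fin 1) ℝ)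
    (hQ : (Matrix.fromBlocks Q11 q qᵀ (1 : Matrix (Fin 1) (Fin 1) ℝ)).PosDef)
    (hQnonneg : ∀ i j, 0 ≤ Matrix.fromBlocks Q11 q qᵀ (1 : Matrix (Fin 1) (Fin 1) ℝ) i j)
    (hQinv : ∀ i j, i ≠ j →
      (Matrix.fromBlocks Q11 q qᵀ (1 : Matrix (Fin 1) (Fin 1) ℝ))⁻¹ i j ≤ 0)
    (τ : ℝ) (hτ : τ ∈ Set.Icc (0:ℝ) 1) :
    (Matrix.fromBlocks Q11 (τ • q) (τ • qᵀ) (1 : Matrix (Fin 1) (Fin 1) ℝ)).PosDef ∧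
    ∀ i j, i ≠ j →
      (Matrix.fromBlocks Q11 (τ • q) (τ • qᵀ) (1 : Matrix (Fin 1) (Fin 1) ℝ))⁻¹ i j ≤ 0 :=
  stmt4_general Q11 q hQ hQinv τ hτ
end

section
/- For fixed x > 0, the central gamma cdf G_α(x) = ∫₀ˣ Γ(α)^{−1} e^{−t} t^{α−1} dt is strictly decreasing as a function of the shape parameter α > 0. -/
open MeasureTheory Set

/-- The (central) gamma cdf with shape parameter `α`:
`G_α(x) = ∫₀ˣ Γ(α)⁻¹ e^{−t} t^{α−1} dt`. -/
noncomputable def centralGammaCDF (α x : ℝ) : ℝ :=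
  ∫ t in (0:ℝ)..x, (Real.Gamma α)⁻¹ * Real.exp (-t) * t ^ (α - 1)

/-!
The densities `g_α` and `g_β` (`α < β`) have ratio `g_β / g_α = Γ(α) Γ(β)⁻¹ t^{β-α}`, which is
strictly increasing, so they cross exactly once: `g_α > g_β` before the crossing point `c` and
`g_α < g_β` after it. Both have total mass one, so `∫₀ˣ (g_α - g_β)` is positive for `x ≤ c`
because the integrand is, and for `x > c` because it equals `∫ₓ^∞ (g_β - g_α)`.
-/

theorem setIntegral_Ioi_pos {f : ℝ → ℝ} {a : ℝ} (hf : IntegrableOn f (Ioi a))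
    (hpos : ∀ t ∈ Ioi a, 0 < f t) : 0 < ∫ t in Ioi a, f t := by
  have hsupp : Function.support f ∩ Ioi a = Ioi a :=
    inter_eq_self_of_subset_right fun t ht => (hpos t ht).ne'
  rw [setIntegral_pos_iff_support_of_nonneg_ae
    ((ae_restrict_iff' measurableSet_Ioi).2 (ae_of_all _ fun t ht => (hpos t ht).le)) hf, hsupp]
  simp

theorem intervalIntegral_lt_of_single_crossing {f g : ℝ → ℝ} {a c x : ℝ}
    (hf : IntegrableOn f (Ioi a)) (hg : IntegrableOn g (Ioi a))
    (hfg : ∫ t in Ioi a, f t = ∫ t in Ioi a, g t)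
    (hlt : ∀ t ∈ Ioo a c, g t < f t) (hgt : ∀ t ∈ Ioi c, f t < g t) (hx : a < x) :
    ∫ t in a..x, g t < ∫ t in a..x, f t := by
  have hdiff : IntegrableOn (fun t => f t - g t) (Ioi a) := hf.sub hg
  have hIoc : ∀ {h : ℝ → ℝ}, IntegrableOn h (Ioi a) → IntervalIntegrable h volume a x :=
    fun hh => (intervalIntegrable_iff_integrableOn_Ioc_of_le hx.le).2
      (hh.mono_set Ioc_subset_Ioi_self)
  rw [← sub_pos, ← intervalIntegral.integral_sub (hIoc hf) (hIoc hg)]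
  rcases le_or_gt x c with hxc | hcx
  · exact intervalIntegral.intervalIntegral_pos_of_pos_on (hIoc hdiff)
      (fun t ht => sub_pos.2 (hlt t ⟨ht.1, ht.2.trans_le hxc⟩)) hx
  · have htail : 0 < ∫ t in Ioi x, (g t - f t) :=
      setIntegral_Ioi_pos ((hg.sub hf).mono_set (Ioi_subset_Ioi hx.le))
        fun t ht => sub_pos.2 (hgt t (hcx.trans ht))
    have htotal : ∫ t in Ioi a, (f t - g t) = 0 := by
      rw [integral_sub hf hg, hfg, sub_self]
    rw [← intervalIntegral.integral_Ioi_sub_Ioi hdiff hx.le, htotal, zero_sub]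
    simpa only [← integral_neg, neg_sub] using htail

noncomputable def gammaDensity (α t : ℝ) : ℝ :=
  (Real.Gamma α)⁻¹ * Real.exp (-t) * t ^ (α - 1)

theorem integrableOn_gammaDensity {α : ℝ} (hα : 0 < α) :
    IntegrableOn (gammaDensity α) (Ioi 0) := by
  have h := (Real.GammaIntegral_convergent hα).const_mul (Real.Gamma α)⁻¹
  simp only [← mul_assoc] at h
  exact h

theorem integral_gammaDensity {α : ℝ} (hα : 0 < α) :
    ∫ t in Ioi (0:ℝ), gammaDensity α t = 1 := by
  simp_rw [gammaDensity, mul_assoc, integral_const_mul, ← Real.Gamma_eq_integral hα]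
  exact inv_mul_cancel₀ (Real.Gamma_pos_of_pos hα).ne'

theorem gammaDensity_sub_gammaDensity {α β t : ℝ} (hβ : Real.Gamma β ≠ 0) (ht : 0 < t) :
    gammaDensity α t - gammaDensity β t =
      (Real.Gamma β)⁻¹ * Real.exp (-t) * t ^ (α - 1) *
        (Real.Gamma β / Real.Gamma α - t ^ (β - α)) := by
  have hpow : t ^ (β - 1) = t ^ (α - 1) * t ^ (β - α) := by
    rw [← Real.rpow_add ht]; ring_nf
  rw [gammaDensity, gammaDensity, hpow]
  field_simp

theorem exists_gammaDensity_crossing {α β : ℝ} (hα : 0 < α) (hαβ : α < β) :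
    ∃ c, (∀ t ∈ Ioo 0 c, gammaDensity β t < gammaDensity α t) ∧
      ∀ t ∈ Ioi c, gammaDensity α t < gammaDensity β t := by
  have hΓα := Real.Gamma_pos_of_pos hα
  have hΓβ := Real.Gamma_pos_of_pos (hα.trans hαβ)
  have hd : 0 < β - α := sub_pos.2 hαβ
  set c := (Real.Gamma β / Real.Gamma α) ^ (β - α)⁻¹
  have hc : 0 < c := Real.rpow_pos_of_pos (div_pos hΓβ hΓα) _
  have hcpow : c ^ (β - α) = Real.Gamma β / Real.Gamma α :=
    Real.rpow_inv_rpow (div_pos hΓβ hΓα).le hd.ne'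
  have hfactor : ∀ t, 0 < t → 0 < (Real.Gamma β)⁻¹ * Real.exp (-t) * t ^ (α - 1) :=
    fun t ht => by positivity
  refine ⟨c, fun t ht => ?_, fun t ht => ?_⟩
  · have ht0 : 0 < t := ht.1
    rw [← sub_pos, gammaDensity_sub_gammaDensity hΓβ.ne' ht0, ← hcpow]
    exact mul_pos (hfactor t ht0)
      (sub_pos.2 (Real.rpow_lt_rpow ht0.le ht.2 hd))
  · have ht0 : 0 < t := hc.trans ht
    rw [← sub_neg, gammaDensity_sub_gammaDensity hΓβ.ne' ht0, ← hcpow]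
    exact mul_neg_of_pos_of_neg (hfactor t ht0)
      (sub_neg.2 (Real.rpow_lt_rpow hc.le ht hd))

/-- For fixed `x > 0`, the central gamma cdf `G_α(x)` is strictly decreasing in the shape
parameter `α > 0`. -/
theorem stmt12 (x : ℝ) (hx : 0 < x) :
    StrictAntiOn (fun α => centralGammaCDF α x) (Set.Ioi (0:ℝ)) := by
  intro α hα β hβ hαβ
  obtain ⟨c, hlt, hgt⟩ := exists_gammaDensity_crossing hα hαβ
  exact intervalIntegral_lt_of_single_crossing (integrableOn_gammaDensity hα)
    (integrableOn_gammaDensity hβ)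
    ((integral_gammaDensity hα).trans (integral_gammaDensity hβ).symm) hlt hgt hx
end

section
/- If R is a symmetric positive definite matrix and S is a signature matrix (diagonal with entries ±1) such that SR^{−1}S has non-positive off-diagonal entries and non-negative inverse, then every principal submatrix R_M satisfies: there exists a signature matrix S_M (namely the restriction of S to M) such that S_M R_M^{−1} S_M has non-positive off-diagonal entries; moreover S_M R_M S_M has non-negative entries. If additionally all entries of R are positive, then S = ±I_n. -/
/-!
Conjugating by the signature matrix, `A = S R S` is positive definite and `A⁻¹ = S R⁻¹ S` is a
Z-matrix. A positive definite Z-matrix `B` is monotone (`B x ≥ 0 → x ≥ 0`: pairing `B x` with the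
negative part `x⁻` gives `x⁻ ⬝ B x⁻ ≤ 0`), hence `B⁻¹ ≥ 0`. For a principal block, `(A_M)⁻¹` is the
Schur complement `D₁₁ - D₁₂ D₂₂⁻¹ D₂₁` of `D = A⁻¹`; since `D₂₂` is again a positive definite
Z-matrix, `D₂₂⁻¹ ≥ 0` and the off-diagonal blocks of `D` are `≤ 0`, so the correction term is `≥ 0`
and `(A_M)⁻¹` is still a Z-matrix. Finally `S_M R_M S_M = A_M ≥ 0`, and if `R > 0` then
`sᵢ sⱼ rᵢⱼ ≥ 0` forces all signs to agree.
-/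

open Matrix

namespace Matrix

section Stieltjes

variable {n : Type*} [Fintype n]

theorem PosDef.nonneg_of_mulVec_nonneg {A : Matrix n n ℝ} (hA : A.PosDef)
    (hZ : ∀ i j, i ≠ j → A i j ≤ 0) {x : n → ℝ} (hx : 0 ≤ A *ᵥ x) : 0 ≤ x := by
  have h_cross : x⁻ ⬝ᵥ A *ᵥ x⁺ ≤ 0 := by
    refine Finset.sum_nonpos fun k _ => ?_
    rw [mulVec, dotProduct, Finset.mul_sum]
    refine Finset.sum_nonpos fun l _ => ?_
    rcases eq_or_ne k l with rfl | hkl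
    · rcases le_total (x k) 0 with h | h
      · simp [posPart_eq_zero.2 h]
      · simp [negPart_eq_zero.2 h]
    · exact mul_nonpos_of_nonneg_of_nonpos (negPart_nonneg x k)
        (mul_nonpos_of_nonpos_of_nonneg (hZ k l hkl) (posPart_nonneg x l))
  have h_split : x⁻ ⬝ᵥ A *ᵥ x = x⁻ ⬝ᵥ A *ᵥ x⁺ - x⁻ ⬝ᵥ A *ᵥ x⁻ := by
    rw [← dotProduct_sub, ← mulVec_sub, posPart_sub_negPart]
  have h_neg : x⁻ = 0 := by
    by_contra hne
    have := hA.dotProduct_mulVec_pos hne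
    rw [star_trivial] at this
    linarith [dotProduct_nonneg_of_nonneg (negPart_nonneg x) hx]
  rw [← posPart_sub_negPart x, h_neg, sub_zero]
  exact posPart_nonneg x

theorem PosDef.inv_nonneg_of_offDiag_nonpos [DecidableEq n] {A : Matrix n n ℝ} (hA : A.PosDef)
    (hZ : ∀ i j, i ≠ j → A i j ≤ 0) (i j : n) : 0 ≤ A⁻¹ i j := by
  have hcol : A *ᵥ A⁻¹.col j = Pi.single j 1 := by
    rw [← mulVec_single_one, mulVec_mulVec,
      mul_nonsing_inv _ ((isUnit_iff_isUnit_det A).1 hA.isUnit), one_mulVec]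
  exact hA.nonneg_of_mulVec_nonneg hZ (hcol ▸ Pi.single_nonneg.2 zero_le_one) i

end Stieltjes

theorem inv_toBlocks₁₁_eq {p q α : Type*} [Fintype p] [Fintype q] [DecidableEq p] [DecidableEq q]
    [CommRing α] (C : Matrix (p ⊕ q) (p ⊕ q) α) (hC : IsUnit C.det)
    (hD : IsUnit (C⁻¹.toBlocks₂₂).det) :
    C.toBlocks₁₁⁻¹ =
      C⁻¹.toBlocks₁₁ - C⁻¹.toBlocks₁₂ * C⁻¹.toBlocks₂₂⁻¹ * C⁻¹.toBlocks₂₁ := by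
  set D := C⁻¹
  have hCD : C * D = 1 := mul_nonsing_inv C hC
  rw [← fromBlocks_toBlocks C, ← fromBlocks_toBlocks D, fromBlocks_multiply, ← fromBlocks_one,
    fromBlocks_inj] at hCD
  obtain ⟨h₁₁, h₁₂, -, -⟩ := hCD
  have hC₁₂ : C.toBlocks₁₂ = -(C.toBlocks₁₁ * D.toBlocks₁₂ * D.toBlocks₂₂⁻¹) := by
    rw [← mul_nonsing_inv_cancel_right _ C.toBlocks₁₂ hD, eq_neg_of_add_eq_zero_right h₁₂,
      Matrix.neg_mul]
  refine inv_eq_right_inv ?_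
  rw [Matrix.mul_sub, ← h₁₁, hC₁₂, sub_eq_add_neg, Matrix.neg_mul, Matrix.mul_assoc,
    Matrix.mul_assoc, Matrix.mul_assoc]

theorem PosDef.inv_toBlocks₁₁_offDiag_nonpos {p q : Type*} [Fintype p] [Fintype q]
    [DecidableEq p] [DecidableEq q] {C : Matrix (p ⊕ q) (p ⊕ q) ℝ} (hC : C.PosDef)
    (hZ : ∀ i j, i ≠ j → C⁻¹ i j ≤ 0) (i j : p) (hij : i ≠ j) : C.toBlocks₁₁⁻¹ i j ≤ 0 := by
  have hD₂₂ : C⁻¹.toBlocks₂₂.PosDef := hC.inv.submatrix Sum.inr_injective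
  have hD₂₂_inv : ∀ k l, 0 ≤ C⁻¹.toBlocks₂₂⁻¹ k l :=
    hD₂₂.inv_nonneg_of_offDiag_nonpos fun k l hkl => hZ _ _ (Sum.inr_injective.ne hkl)
  have h_corr : 0 ≤ (C⁻¹.toBlocks₁₂ * C⁻¹.toBlocks₂₂⁻¹ * C⁻¹.toBlocks₂₁) i j :=
    Finset.sum_nonneg fun k _ => mul_nonneg_of_nonpos_of_nonpos
      (Finset.sum_nonpos fun l _ =>
        mul_nonpos_of_nonpos_of_nonneg (hZ _ _ Sum.inl_ne_inr) (hD₂₂_inv l k))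
      (hZ _ _ Sum.inr_ne_inl)
  rw [inv_toBlocks₁₁_eq C ((isUnit_iff_isUnit_det C).1 hC.isUnit)
    ((isUnit_iff_isUnit_det _).1 hD₂₂.isUnit), sub_apply]
  exact sub_nonpos.2 ((hZ (.inl i) (.inl j) (Sum.inl_injective.ne hij)).trans h_corr)

theorem PosDef.inv_submatrix_finset_offDiag_nonpos {n : Type*} [Fintype n] [DecidableEq n]
    {A : Matrix n n ℝ} (hA : A.PosDef) (hZ : ∀ i j, i ≠ j → A⁻¹ i j ≤ 0)
    (M : Finset n) (i j : M) (hij : i ≠ j) :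
    (A.submatrix ((↑) : M → n) (↑))⁻¹ i j ≤ 0 := by
  let e := Equiv.sumCompl (· ∈ M)
  refine (hA.submatrix e.injective).inv_toBlocks₁₁_offDiag_nonpos (fun a b hab => ?_) i j hij
  rw [inv_submatrix_equiv]
  exact hZ _ _ (e.injective.ne hab)

section Signature

variable {n : Type*} [Fintype n] [DecidableEq n]

theorem diagonal_mul_self_eq_one {α : Type*} [Semiring α] {s : n → α} (hs : ∀ i, s i * s i = 1) :
    diagonal s * diagonal s = 1 := by
  rw [diagonal_mul_diagonal, ← diagonal_one]
  exact congrArg diagonal (funext hs)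

theorem inv_mul_mul_eq_of_mul_self_eq_one {α : Type*} [CommRing α] {S : Matrix n n α}
    (hS : S * S = 1) (A : Matrix n n α) : (S * A * S)⁻¹ = S * A⁻¹ * S := by
  rw [mul_inv_rev, mul_inv_rev, inv_eq_left_inv hS, Matrix.mul_assoc]

theorem PosDef.diagonal_mul_mul_diagonal {R : Matrix n n ℝ} (hR : R.PosDef) {s : n → ℝ}
    (hs : ∀ i, s i ≠ 0) : (diagonal s * R * diagonal s).PosDef := by
  have hinj : Function.Injective (diagonal s).mulVec := fun x y h =>
    funext fun i => mul_left_cancel₀ (hs i) (by simpa [mulVec_diagonal] using congrFun h i)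
  simpa using hR.conjTranspose_mul_mul_same hinj

theorem submatrix_diagonal_mul_mul_diagonal {m α : Type*} [Fintype m] [DecidableEq m] [Semiring α]
    (s : n → α) (A : Matrix n n α) (f : m → n) :
    (diagonal s * A * diagonal s).submatrix f f =
      diagonal (fun i => s (f i)) * A.submatrix f f * diagonal (fun i => s (f i)) := by
  ext i j
  simp [diagonal_mul, mul_diagonal]

end Signature

end Matrix

/-- If `R` is symmetric positive definite and `S = diag(s)` is a signature matrix such that
`SR⁻¹S` has non-positive off-diagonal entries and its inverse `SRS` has non-negative
entries, then for every principal submatrix `R_M` the restricted signature matrix `S_M`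
makes `S_M R_M⁻¹ S_M` have non-positive off-diagonal entries and `S_M R_M S_M` have
non-negative entries; if moreover all entries of `R` are positive then `S = ±I`. -/
theorem stmt18 {n : ℕ}
    (R : Matrix (Fin n) (Fin n) ℝ) (hR : R.PosDef)
    (s : Fin n → ℝ) (hs : ∀ i, s i = 1 ∨ s i = -1)
    (hoff : ∀ i j, i ≠ j → (Matrix.diagonal s * R⁻¹ * Matrix.diagonal s) i j ≤ 0)
    (hpos : ∀ i j, 0 ≤ (Matrix.diagonal s * R * Matrix.diagonal s) i j) :
    (∀ M : Finset (Fin n),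
      (∀ i j : M, i ≠ j →
        (Matrix.diagonal (fun i : M => s i) *
          (R.submatrix (fun i : M => (i : Fin n)) (fun i : M => (i : Fin n)))⁻¹ *
          Matrix.diagonal (fun i : M => s i)) i j ≤ 0) ∧
      (∀ i j : M, 0 ≤
        (Matrix.diagonal (fun i : M => s i) *
          R.submatrix (fun i : M => (i : Fin n)) (fun i : M => (i : Fin n)) *
          Matrix.diagonal (fun i : M => s i)) i j)) ∧
    ((∀ i j, 0 < R i j) → (∀ i, s i = 1) ∨ (∀ i, s i = -1)) := by
  have hs_sq : ∀ i, s i * s i = 1 := fun i => by rcases hs i with h | h <;> simp [h]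
  have hA : (diagonal s * R * diagonal s).PosDef :=
    hR.diagonal_mul_mul_diagonal fun i => left_ne_zero_of_mul_eq_one (hs_sq i)
  have hA_inv : (diagonal s * R * diagonal s)⁻¹ = diagonal s * R⁻¹ * diagonal s :=
    inv_mul_mul_eq_of_mul_self_eq_one (diagonal_mul_self_eq_one hs_sq) R
  refine ⟨fun M => ⟨fun i j hij => ?_, fun i j => ?_⟩, fun hR_pos => ?_⟩
  · have hS_M : diagonal (fun i : M => s i) * diagonal (fun i : M => s i) = 1 :=
      diagonal_mul_self_eq_one fun i => hs_sq i
    rw [← inv_mul_mul_eq_of_mul_self_eq_one hS_M, ← submatrix_diagonal_mul_mul_diagonal]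
    exact hA.inv_submatrix_finset_offDiag_nonpos (hA_inv ▸ hoff) M i j hij
  · rw [← submatrix_diagonal_mul_mul_diagonal]
    exact hpos i j
  · have h_const : ∀ i j, s i = s j := fun i j => by
      have h := hpos i j
      simp only [diagonal_mul, mul_diagonal] at h
      rcases hs i with hi | hi <;> rcases hs j with hj | hj <;> simp [hi, hj] at h ⊢ <;>
        linarith [hR_pos i j]
    rcases isEmpty_or_nonempty (Fin n) with _ | ⟨⟨i₀⟩⟩
    · exact Or.inl isEmptyElim
    · exact (hs i₀).imp (fun h i => (h_const i i₀).trans h) (fun h i => (h_const i i₀).trans h)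
end
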